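/- arXiv:2602.10737 — 3 statements merged into one kernel-verified Lean document; each statement's English description precedes it below -/
import Mathlib

section
/- Let D = diag(d₁,...,dₙ) be an n×t complex matrix (n ≤ t) with dᵢ ≠ 0 for all i and |dᵢ|² pairwise distinct. If A ∈ ℂ^{n×t} is such that both AD* and D*A are Hermitian, then A is a diagonal matrix (A_{ij} = 0 for all i ≠ j, including A_{ij} = 0 for j > n). -/
/-!
Write `x = A i j` for an off-diagonal entry. When both `i` and `j` index a diagonal entry of `D`
(`i < t`, `j < n`), the `(j, i)` entries of the Hermitian matrices `AD*` and `D*A` relate `x` to the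
mirrored entry `y = A j i`: `y d̄ᵢ = x̄ dⱼ` and `d̄ⱼ y = dᵢ x̄`. Eliminating `y` gives
`x̄ (|dⱼ|² - |dᵢ|²) = 0`. Otherwise one of the two products has a zero row or column at the
mirrored position, and Hermitian symmetry forces `dᵢ x = 0` or `x dⱼ = 0`.
-/

open Matrix ComplexConjugate

def rectDiagonal {R : Type*} [Zero R] {n : ℕ} (t : ℕ) (d : Fin n → R) :
    Matrix (Fin n) (Fin t) R :=
  of fun i j => if (j : ℕ) = i then d i else 0

section Entries

variable {R : Type*} [Semiring R] [StarRing R] {m n t : ℕ} (d : Fin n → R)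

theorem mul_conjTranspose_rectDiagonal_apply_of_val_eq (A : Matrix (Fin m) (Fin t) R)
    (p : Fin m) {q : Fin n} {j : Fin t} (hj : (j : ℕ) = q) :
    (A * (rectDiagonal t d)ᴴ) p q = A p j * star (d q) := by
  rw [mul_apply, Finset.sum_eq_single j]
  · simp [rectDiagonal, hj]
  · intro k _ hk
    have : (k : ℕ) ≠ q := fun h => hk (Fin.ext (h.trans hj.symm))
    simp [rectDiagonal, this]
  · simp

theorem mul_conjTranspose_rectDiagonal_apply_of_le (A : Matrix (Fin m) (Fin t) R)
    (p : Fin m) {q : Fin n} (hq : t ≤ q) :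
    (A * (rectDiagonal t d)ᴴ) p q = 0 := by
  rw [mul_apply]
  refine Finset.sum_eq_zero fun k _ => ?_
  have : (k : ℕ) ≠ q := by omega
  simp [rectDiagonal, this]

theorem conjTranspose_rectDiagonal_mul_apply_of_val_eq (A : Matrix (Fin n) (Fin m) R)
    {i : Fin t} {p : Fin n} (hi : (i : ℕ) = p) (q : Fin m) :
    ((rectDiagonal t d)ᴴ * A) i q = star (d p) * A p q := by
  rw [mul_apply, Finset.sum_eq_single p]
  · simp [rectDiagonal, hi]
  · intro k _ hk
    have : (i : ℕ) ≠ k := fun h => hk (Fin.ext (hi.symm.trans h).symm)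
    simp [rectDiagonal, this]
  · simp

theorem conjTranspose_rectDiagonal_mul_apply_of_le (A : Matrix (Fin n) (Fin m) R)
    {i : Fin t} (hi : n ≤ i) (q : Fin m) :
    ((rectDiagonal t d)ᴴ * A) i q = 0 := by
  rw [mul_apply]
  refine Finset.sum_eq_zero fun k _ => ?_
  have : (i : ℕ) ≠ k := by omega
  simp [rectDiagonal, this]

end Entries

section Hermitian

variable {𝕜 : Type*} [RCLike 𝕜] {n t : ℕ} {d : Fin n → 𝕜} {A : Matrix (Fin n) (Fin t) 𝕜}

theorem RCLike.eq_zero_of_mul_conj_eq_of_conj_mul_eq {a b x y : 𝕜}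
    (h₁ : y * conj a = conj x * b) (h₂ : conj b * y = a * conj x) (hab : ‖a‖ ^ 2 ≠ ‖b‖ ^ 2) :
    x = 0 := by
  have hnorm : conj x * ((‖b‖ ^ 2 - ‖a‖ ^ 2 : ℝ) : 𝕜) = 0 := by
    push_cast
    rw [← RCLike.mul_conj, ← RCLike.mul_conj]
    linear_combination conj a * h₂ - conj b * h₁
  have hne : ((‖b‖ ^ 2 - ‖a‖ ^ 2 : ℝ) : 𝕜) ≠ 0 :=
    RCLike.ofReal_ne_zero.mpr (sub_ne_zero.mpr hab.symm)
  simpa using (mul_eq_zero.mp hnorm).resolve_right hne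

theorem apply_eq_zero_of_isHermitian_of_norm_sq_ne
    (h₁ : (A * (rectDiagonal t d)ᴴ).IsHermitian) (h₂ : ((rectDiagonal t d)ᴴ * A).IsHermitian)
    {i : Fin n} {j : Fin t} {i' : Fin t} {j' : Fin n} (hi : (i' : ℕ) = i) (hj : (j : ℕ) = j')
    (hne : ‖d i‖ ^ 2 ≠ ‖d j'‖ ^ 2) :
    A i j = 0 := by
  have e₁ := h₁.apply j' i
  have e₂ := h₂.apply j i'
  rw [mul_conjTranspose_rectDiagonal_apply_of_val_eq d _ _ hj,
    mul_conjTranspose_rectDiagonal_apply_of_val_eq d _ _ hi, star_mul', star_star] at e₁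
  rw [conjTranspose_rectDiagonal_mul_apply_of_val_eq d _ hi,
    conjTranspose_rectDiagonal_mul_apply_of_val_eq d _ hj, star_mul', star_star] at e₂
  exact RCLike.eq_zero_of_mul_conj_eq_of_conj_mul_eq e₁.symm e₂.symm hne

theorem apply_eq_zero_of_isHermitian_mul_conjTranspose_of_le
    (h : (A * (rectDiagonal t d)ᴴ).IsHermitian) (hd : ∀ k, d k ≠ 0)
    {i : Fin n} {j : Fin t} (hi : t ≤ i) : A i j = 0 := by
  have hj : (j : ℕ) < n := by omega
  have e := h.apply i ⟨j, hj⟩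
  rw [mul_conjTranspose_rectDiagonal_apply_of_le d _ _ hi, star_zero,
    mul_conjTranspose_rectDiagonal_apply_of_val_eq d _ _ (j := j) rfl] at e
  exact (mul_eq_zero.mp e.symm).resolve_right (star_ne_zero.mpr (hd _))

theorem apply_eq_zero_of_isHermitian_conjTranspose_mul_of_le
    (h : ((rectDiagonal t d)ᴴ * A).IsHermitian) (hd : ∀ k, d k ≠ 0)
    {i : Fin n} {j : Fin t} (hj : n ≤ j) : A i j = 0 := by
  have hi : (i : ℕ) < t := by omega
  have e := h.apply ⟨i, hi⟩ j
  rw [conjTranspose_rectDiagonal_mul_apply_of_le d _ hj, star_zero,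
    conjTranspose_rectDiagonal_mul_apply_of_val_eq d _ (i := ⟨i, hi⟩) rfl] at e
  exact (mul_eq_zero.mp e.symm).resolve_left (star_ne_zero.mpr (hd _))

end Hermitian

theorem stmt3_general (n t : ℕ) (d : Fin n → ℂ)
    (hd : ∀ i, d i ≠ 0)
    (hdist : ∀ i j : Fin n, i ≠ j → ‖d i‖ ^ 2 ≠ ‖d j‖ ^ 2)
    (D : Matrix (Fin n) (Fin t) ℂ)
    (hD : D = Matrix.of fun (i : Fin n) (j : Fin t) => if (j : ℕ) = (i : ℕ) then d i else 0)
    (A : Matrix (Fin n) (Fin t) ℂ)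
    (h1 : (A * Dᴴ).IsHermitian) (h2 : (Dᴴ * A).IsHermitian) :
    ∀ (i : Fin n) (j : Fin t), (j : ℕ) ≠ (i : ℕ) → A i j = 0 := by
  intro i j hij
  obtain rfl : D = rectDiagonal t d := hD
  by_cases hj : (j : ℕ) < n
  · by_cases hi : (i : ℕ) < t
    · exact apply_eq_zero_of_isHermitian_of_norm_sq_ne h1 h2 (i' := ⟨i, hi⟩) (j' := ⟨j, hj⟩)
        rfl rfl (hdist _ _ (Fin.ne_of_val_ne (Ne.symm hij)))
    · exact apply_eq_zero_of_isHermitian_mul_conjTranspose_of_le h1 hd (not_lt.mp hi)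
  · exact apply_eq_zero_of_isHermitian_conjTranspose_mul_of_le h2 hd (not_lt.mp hj)

/-- If `D = diag(d)` is an `n×t` rectangular diagonal matrix with nonzero entries whose
squared absolute values are pairwise distinct, and both `AD*` and `D*A` are Hermitian,
then `A` is diagonal. -/
theorem stmt3 (n t : ℕ) (hnt : n ≤ t) (d : Fin n → ℂ)
    (hd : ∀ i, d i ≠ 0)
    (hdist : ∀ i j : Fin n, i ≠ j → ‖d i‖ ^ 2 ≠ ‖d j‖ ^ 2)
    (D : Matrix (Fin n) (Fin t) ℂ)
    (hD : D = Matrix.of fun (i : Fin n) (j : Fin t) => if (j : ℕ) = (i : ℕ) then d i else 0)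
    (A : Matrix (Fin n) (Fin t) ℂ)
    (h1 : (A * Dᴴ).IsHermitian) (h2 : (Dᴴ * A).IsHermitian) :
    ∀ (i : Fin n) (j : Fin t), (j : ℕ) ≠ (i : ℕ) → A i j = 0 :=
  stmt3_general n t d hd hdist D hD A h1 h2
end

section
/- Let D = diag(d₁,...,dₙ) be an n×t matrix with all dᵢ real, dᵢ ≠ 0, and dᵢ² pairwise distinct. If A ∈ ℂ^{n×t} is such that AD* and D*A are both Hermitian, then A is a real diagonal matrix (all entries real, off-diagonal entries zero). -/
/-!
Write `D` for the rectangular diagonal matrix. Inside the square block the entries of `A Dᴴ` and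
`Dᴴ A` are `A i j * d j` and `d i * A i j`. For `i ≠ k`, the two Hermitian conditions give
`a * d i = b * d k` and `a * d k = b * d i` with `b = A i k`, `a = conj (A k i)`, hence
`b * (d k ^ 2 - d i ^ 2) = 0`. An entry outside the square block is killed because its mirror
entry in `A Dᴴ` or `Dᴴ A` is zero, and on the diagonal `d i * A i i` is real.
-/

open Matrix

theorem eq_zero_of_mul_eq_of_mul_eq {R : Type*} [CommRing R] [NoZeroDivisors R] {a b x y : R}
    (h₁ : a * x = b * y) (h₂ : a * y = b * x) (hxy : x ^ 2 ≠ y ^ 2) : b = 0 := by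
  have hb : b * (y ^ 2 - x ^ 2) = 0 := by linear_combination x * h₂ - y * h₁
  exact (mul_eq_zero.mp hb).resolve_right (sub_ne_zero.mpr hxy.symm)

namespace Matrix

def rectDiag {n t : ℕ} (d : Fin n → ℝ) : Matrix (Fin n) (Fin t) ℂ :=
  of fun i j => if (j : ℕ) = i then (d i : ℂ) else 0

variable {n t : ℕ} (d : Fin n → ℝ)

section
variable {ι : Type*} (A : Matrix ι (Fin t) ℂ) (i : ι) {k : Fin n}

theorem mul_conjTranspose_rectDiag_apply_of_val_eq {j : Fin t} (h : (j : ℕ) = k) :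
    (A * (rectDiag (t := t) d)ᴴ) i k = A i j * d k := by
  rw [mul_apply, Finset.sum_eq_single j]
  · simp [rectDiag, h]
  · intro j' _ hj'
    simp [rectDiag, ← h, Fin.val_inj, hj']
  · simp

theorem mul_conjTranspose_rectDiag_apply_of_le (h : t ≤ k) :
    (A * (rectDiag (t := t) d)ᴴ) i k = 0 := by
  rw [mul_apply]
  exact Finset.sum_eq_zero fun j _ => by simp [rectDiag, (j.is_lt.trans_le h).ne]

end

section
variable {γ : Type*} (A : Matrix (Fin n) γ ℂ) {j : Fin t} (l : γ)

theorem conjTranspose_rectDiag_mul_apply_of_val_eq {i : Fin n} (h : (j : ℕ) = i) :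
    ((rectDiag (t := t) d)ᴴ * A) j l = d i * A i l := by
  rw [mul_apply, Finset.sum_eq_single i]
  · simp [rectDiag, h]
  · intro i' _ hi'
    simp [rectDiag, h, Fin.val_inj, Ne.symm hi']
  · simp

theorem conjTranspose_rectDiag_mul_apply_of_le (h : n ≤ j) :
    ((rectDiag (t := t) d)ᴴ * A) j l = 0 := by
  rw [mul_apply]
  exact Finset.sum_eq_zero fun i _ => by simp [rectDiag, (i.is_lt.trans_le h).ne']

end

variable {d} {A : Matrix (Fin n) (Fin t) ℂ}

theorem apply_eq_zero_of_isHermitian_rectDiag (hd : ∀ i, d i ≠ 0)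
    (hdist : ∀ i j : Fin n, i ≠ j → d i ^ 2 ≠ d j ^ 2)
    (h₁ : (A * (rectDiag (t := t) d)ᴴ).IsHermitian) (h₂ : ((rectDiag d)ᴴ * A).IsHermitian)
    {i : Fin n} {j : Fin t} (hij : (j : ℕ) ≠ i) : A i j = 0 := by
  by_cases hjn : (j : ℕ) < n
  · obtain ⟨k, hjk⟩ : ∃ k : Fin n, (j : ℕ) = k := ⟨⟨j, hjn⟩, rfl⟩
    have e₁ := h₁.apply i k
    rw [mul_conjTranspose_rectDiag_apply_of_val_eq d A i hjk] at e₁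
    by_cases hit : (i : ℕ) < t
    · obtain ⟨i', hii'⟩ : ∃ i' : Fin t, (i' : ℕ) = i := ⟨⟨i, hit⟩, rfl⟩
      rw [mul_conjTranspose_rectDiag_apply_of_val_eq d A k hii'] at e₁
      have e₂ := h₂.apply i' j
      rw [conjTranspose_rectDiag_mul_apply_of_val_eq d A i' hjk,
        conjTranspose_rectDiag_mul_apply_of_val_eq d A j hii'] at e₂
      have hik : i ≠ k := by rintro rfl; exact hij hjk
      refine eq_zero_of_mul_eq_of_mul_eq (a := star (A k i')) (x := (d i : ℂ)) (y := d k)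
        ?_ ?_ (by exact_mod_cast hdist i k hik)
      · simpa [Complex.conj_ofReal] using e₁
      · simpa [Complex.conj_ofReal, mul_comm] using e₂
    · rw [mul_conjTranspose_rectDiag_apply_of_le d A k (not_lt.mp hit), star_zero] at e₁
      exact (mul_eq_zero.mp e₁.symm).resolve_right (by exact_mod_cast hd k)
  · obtain ⟨i', hii'⟩ : ∃ i' : Fin t, (i' : ℕ) = i := ⟨⟨i, by omega⟩, rfl⟩
    have e₂ := h₂.apply i' j
    rw [conjTranspose_rectDiag_mul_apply_of_le d A i' (not_lt.mp hjn),
      conjTranspose_rectDiag_mul_apply_of_val_eq d A j hii', star_zero] at e₂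
    exact (mul_eq_zero.mp e₂.symm).resolve_left (by exact_mod_cast hd i)

theorem im_apply_eq_zero_of_isHermitian_rectDiag (hd : ∀ i, d i ≠ 0)
    (h₂ : ((rectDiag d)ᴴ * A).IsHermitian) {i : Fin n} {j : Fin t} (hij : (j : ℕ) = i) :
    (A i j).im = 0 := by
  have e₂ := h₂.apply j j
  rw [conjTranspose_rectDiag_mul_apply_of_val_eq d A j hij] at e₂
  have hA : star (A i j) = A i j := by simpa [Complex.conj_ofReal, hd i] using e₂
  exact Complex.conj_eq_iff_im.mp hA

end Matrix

theorem stmt4_general (n t : ℕ) (d : Fin n → ℝ)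
    (hd : ∀ i, d i ≠ 0)
    (hdist : ∀ i j : Fin n, i ≠ j → d i ^ 2 ≠ d j ^ 2)
    (D : Matrix (Fin n) (Fin t) ℂ)
    (hD : D = Matrix.of fun (i : Fin n) (j : Fin t) => if (j : ℕ) = (i : ℕ) then (d i : ℂ) else 0)
    (A : Matrix (Fin n) (Fin t) ℂ)
    (h1 : (A * Dᴴ).IsHermitian) (h2 : (Dᴴ * A).IsHermitian) :
    (∀ (i : Fin n) (j : Fin t), (j : ℕ) ≠ (i : ℕ) → A i j = 0) ∧
    (∀ (i : Fin n) (j : Fin t), (A i j).im = 0) := by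
  obtain rfl : D = rectDiag d := hD
  have hoff (i : Fin n) (j : Fin t) (hij : (j : ℕ) ≠ i) : A i j = 0 :=
    apply_eq_zero_of_isHermitian_rectDiag hd hdist h1 h2 hij
  refine ⟨hoff, fun i j => ?_⟩
  by_cases hij : (j : ℕ) = i
  · exact im_apply_eq_zero_of_isHermitian_rectDiag hd h2 hij
  · rw [hoff i j hij, Complex.zero_im]

/-- If `D = diag(d)` with `d` real, nonzero, and `dᵢ²` pairwise distinct, and both
`AD*` and `D*A` are Hermitian, then `A` is a real diagonal matrix. -/
theorem stmt4 (n t : ℕ) (hnt : n ≤ t) (d : Fin n → ℝ)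
    (hd : ∀ i, d i ≠ 0)
    (hdist : ∀ i j : Fin n, i ≠ j → d i ^ 2 ≠ d j ^ 2)
    (D : Matrix (Fin n) (Fin t) ℂ)
    (hD : D = Matrix.of fun (i : Fin n) (j : Fin t) => if (j : ℕ) = (i : ℕ) then (d i : ℂ) else 0)
    (A : Matrix (Fin n) (Fin t) ℂ)
    (h1 : (A * Dᴴ).IsHermitian) (h2 : (Dᴴ * A).IsHermitian) :
    (∀ (i : Fin n) (j : Fin t), (j : ℕ) ≠ (i : ℕ) → A i j = 0) ∧
    (∀ (i : Fin n) (j : Fin t), (A i j).im = 0) :=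
  stmt4_general n t d hd hdist D hD A h1 h2
end

section
/- Let y = (y₁,...,yₙ) ∈ ℝⁿ have nonzero, pairwise-distinct-in-absolute-value entries, and let v₀ = diag(y) ∈ ℂ^{n×t}. With respect to the real inner product q(A,B) = Re Tr(AB*) on ℂ^{n×t}, the orthogonal complement of the space T = {Z₁ diag(y) + diag(y) Z₂* : Z₁ ∈ u(n), Z₂ ∈ u(t)} equals the space of real diagonal matrices {diag(a) : a ∈ ℝⁿ}. Consequently ℂ^{n×t}, viewed as a real vector space, is the q-orthogonal direct sum of the real diagonal matrices and T. -/
/-!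
Write `D = diag(y)` and `q(A, B) = Re Tr(A Bᴴ)`. Moving the factors of `D` across the trace,
`q(A, Z₁ D) = q(A Dᴴ, Z₁)` and `q(A, D Z₂ᴴ) = q(Dᴴ A, Z₂ᴴ)`; since the `q`-orthogonal complement
of the skew-Hermitian matrices is the Hermitian ones, `A ⊥ T` iff `A Dᴴ` and `Dᴴ A` are Hermitian.
Factor `D = Y P` with `Y = diag(y)` square and invertible and `P = [I 0]`, so `P Pᴴ = 1`. Then
`Dᴴ A` Hermitian forces `A = (A Pᴴ) P`, and both conditions make `A Pᴴ Y` and `Y A Pᴴ` Hermitian,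
which for distinct `yᵢ²` leaves only real diagonal `A Pᴴ`. The direct sum decomposition holds
because `q` is positive definite on a finite-dimensional space.
-/

open Matrix

/-- The `n×t` rectangular diagonal matrix of a real vector. -/
def rdiag (n t : ℕ) (x : Fin n → ℝ) : Matrix (Fin n) (Fin t) ℂ :=
  Matrix.of fun i j => if (j : ℕ) = (i : ℕ) then (x i : ℂ) else 0

namespace LinearMap.BilinForm

theorem isCompl_orthogonal_of_anisotropic {K V : Type*} [Field K] [AddCommGroup V]
    [Module K V] [FiniteDimensional K V] {B : LinearMap.BilinForm K V} (hB : B.IsRefl)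
    (hB₀ : ∀ x, B x x = 0 → x = 0) (W : Submodule K V) : IsCompl W (B.orthogonal W) :=
  isCompl_orthogonal_of_restrict_nondegenerate hB <|
    nondegenerate_restrict_of_disjoint_orthogonal B hB <|
      Submodule.disjoint_def.mpr fun x hx hx' => hB₀ x (hx' x hx)

end LinearMap.BilinForm

section ReTraceForm

open scoped ComplexOrder

variable {m n p : Type*} [Fintype m] [Fintype n] [Fintype p]

noncomputable def reTraceForm : LinearMap.BilinForm ℝ (Matrix m n ℂ) :=
  LinearMap.mk₂ ℝ (fun A B => (trace (A * Bᴴ)).re)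
    (fun A A' B => by simp [Matrix.add_mul])
    (fun r A B => by simp)
    (fun A B B' => by simp [Matrix.mul_add])
    (fun r A B => by simp)

@[simp]
theorem reTraceForm_apply (A B : Matrix m n ℂ) : reTraceForm A B = (trace (A * Bᴴ)).re :=
  rfl

theorem reTraceForm_comm (A B : Matrix m n ℂ) : reTraceForm A B = reTraceForm B A := by
  rw [reTraceForm_apply, reTraceForm_apply, ← conjTranspose_conjTranspose A,
    ← conjTranspose_mul, trace_conjTranspose, conjTranspose_conjTranspose]
  exact Complex.conj_re _

theorem reTraceForm_isRefl : (reTraceForm : LinearMap.BilinForm ℝ (Matrix m n ℂ)).IsRefl :=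
  fun A B h => by rwa [reTraceForm_comm]

theorem reTraceForm_self_eq_zero {A : Matrix m n ℂ} (h : reTraceForm A A = 0) : A = 0 := by
  obtain ⟨-, him⟩ := Complex.nonneg_iff.mp (posSemidef_self_mul_conjTranspose A).trace_nonneg
  exact trace_mul_conjTranspose_self_eq_zero_iff.mp (Complex.ext h him.symm)

theorem reTraceForm_conjTranspose_left (A : Matrix m n ℂ) (B : Matrix n m ℂ) :
    reTraceForm Aᴴ B = reTraceForm A Bᴴ := by
  rw [reTraceForm_apply, reTraceForm_apply, conjTranspose_conjTranspose, ← conjTranspose_mul,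
    trace_conjTranspose, trace_mul_comm]
  exact Complex.conj_re _

theorem reTraceForm_mul_right (A : Matrix m n ℂ) (B : Matrix m p ℂ) (C : Matrix p n ℂ) :
    reTraceForm A (B * C) = reTraceForm (A * Cᴴ) B := by
  simp only [reTraceForm_apply, conjTranspose_mul, Matrix.mul_assoc]

theorem reTraceForm_mul_left (A : Matrix m n ℂ) (C : Matrix m p ℂ) (B : Matrix p n ℂ) :
    reTraceForm A (C * B) = reTraceForm (Cᴴ * A) B := by
  simp only [reTraceForm_apply, conjTranspose_mul, ← Matrix.mul_assoc]
  rw [trace_mul_comm, Matrix.mul_assoc]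

theorem isHermitian_iff_forall_reTraceForm_skew_eq_zero (M : Matrix n n ℂ) :
    M.IsHermitian ↔ ∀ Z : Matrix n n ℂ, Zᴴ = -Z → reTraceForm M Z = 0 := by
  refine ⟨fun hM Z hZ => ?_, fun h => ?_⟩
  · have : reTraceForm M Z = -reTraceForm M Z := by
      conv_lhs => rw [← hM.eq, reTraceForm_conjTranspose_left, hZ, map_neg]
    linarith
  · set K := Mᴴ - M
    have hK : Kᴴ = -K := by simp [K]
    refine sub_eq_zero.mp (reTraceForm_self_eq_zero ?_)
    calc reTraceForm K K = reTraceForm M Kᴴ - reTraceForm M K := by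
          rw [← reTraceForm_conjTranspose_left, ← LinearMap.sub_apply, ← map_sub]
      _ = 0 := by rw [hK, map_neg, h K hK, neg_zero, sub_zero]

end ReTraceForm

section UnitaryOrbitTangent

variable {m n : Type*} [Fintype m] [Fintype n]

def unitaryOrbitTangent (D : Matrix m n ℂ) : Submodule ℝ (Matrix m n ℂ) where
  carrier := {B | ∃ (Z₁ : Matrix m m ℂ) (Z₂ : Matrix n n ℂ),
    Z₁ᴴ = -Z₁ ∧ Z₂ᴴ = -Z₂ ∧ B = Z₁ * D + D * Z₂ᴴ}
  zero_mem' := ⟨0, 0, by simp, by simp, by simp⟩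
  add_mem' := by
    rintro _ _ ⟨Z₁, Z₂, h₁, h₂, rfl⟩ ⟨W₁, W₂, k₁, k₂, rfl⟩
    refine ⟨Z₁ + W₁, Z₂ + W₂, by simp [h₁, k₁, add_comm], by simp [h₂, k₂, add_comm], ?_⟩
    simp only [conjTranspose_add, Matrix.add_mul, Matrix.mul_add]
    abel
  smul_mem' := by
    rintro r _ ⟨Z₁, Z₂, h₁, h₂, rfl⟩
    exact ⟨r • Z₁, r • Z₂, by simp [h₁], by simp [h₂], by simp [smul_add]⟩

theorem forall_mem_unitaryOrbitTangent_reTraceForm_eq_zero_iff (A D : Matrix m n ℂ) :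
    (∀ B ∈ unitaryOrbitTangent D, reTraceForm A B = 0) ↔
      (A * Dᴴ).IsHermitian ∧ (Dᴴ * A).IsHermitian := by
  simp only [isHermitian_iff_forall_reTraceForm_skew_eq_zero]
  refine ⟨fun h => ⟨fun Z hZ => ?_, fun W hW => ?_⟩, ?_⟩
  · have := h _ ⟨Z, 0, hZ, by simp, rfl⟩
    rwa [conjTranspose_zero, Matrix.mul_zero, add_zero, reTraceForm_mul_right] at this
  · have := h _ ⟨0, Wᴴ, by simp, by rw [conjTranspose_conjTranspose, hW, neg_neg], rfl⟩
    rwa [Matrix.zero_mul, zero_add, conjTranspose_conjTranspose, reTraceForm_mul_left] at this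
  · rintro ⟨h₁, h₂⟩ _ ⟨Z₁, Z₂, hZ₁, hZ₂, rfl⟩
    rw [map_add, reTraceForm_mul_right, reTraceForm_mul_left, h₁ Z₁ hZ₁,
      h₂ _ (by rw [conjTranspose_conjTranspose, hZ₂, neg_neg]), add_zero]

end UnitaryOrbitTangent

namespace Matrix

theorem eq_mul_conjTranspose_mul_of_isHermitian {m n R : Type*} [Fintype m] [Fintype n]
    [DecidableEq m] [Ring R] [StarRing R] {P A : Matrix m n R} {Y : Matrix m m R}
    (hP : P * Pᴴ = 1) (hY : IsUnit Y) (h : (Pᴴ * Y * A).IsHermitian) : A = A * Pᴴ * P := by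
  have hsym : Pᴴ * Y * A = Aᴴ * Yᴴ * P := by
    conv_lhs => rw [← h.eq]
    simp only [conjTranspose_mul, conjTranspose_conjTranspose, Matrix.mul_assoc]
  have hYA : Y * (A - A * Pᴴ * P) = 0 :=
    calc Y * (A - A * Pᴴ * P) = P * (Pᴴ * Y * A) - P * (Pᴴ * Y * A) * Pᴴ * P := by
          simp only [Matrix.mul_sub, ← Matrix.mul_assoc, hP, Matrix.one_mul]
      _ = 0 := by
          rw [hsym]
          simp only [Matrix.mul_assoc]
          rw [← Matrix.mul_assoc P Pᴴ P, hP, Matrix.one_mul, sub_self]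
  have hA : A - A * Pᴴ * P = 0 := by
    rw [← Matrix.one_mul (A - _), ← hY.val_inv_mul, Matrix.mul_assoc, hYA, Matrix.mul_zero]
  exact sub_eq_zero.mp hA

theorem isHermitian_diagonal_ofReal {ι : Type*} [DecidableEq ι] (x : ι → ℝ) :
    (diagonal fun i => (x i : ℂ)).IsHermitian :=
  isHermitian_diagonal_of_self_adjoint _ (funext fun i => Complex.conj_ofReal (x i))

theorem exists_eq_diagonal_ofReal_of_isHermitian {ι : Type*} [Fintype ι] [DecidableEq ι]
    {y : ι → ℝ} (hy : ∀ i, y i ≠ 0) (hdist : ∀ i j, i ≠ j → |y i| ≠ |y j|) {B : Matrix ι ι ℂ}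
    (h₁ : (B * diagonal fun i => (y i : ℂ)).IsHermitian)
    (h₂ : ((diagonal fun i => (y i : ℂ)) * B).IsHermitian) :
    ∃ a : ι → ℝ, B = diagonal fun i => (a i : ℂ) := by
  have e₁ : ∀ i k, star (B k i) * y i = B i k * y k := fun i k => by
    simpa [mul_diagonal] using h₁.apply i k
  have e₂ : ∀ i k, y k * star (B k i) = y i * B i k := fun i k => by
    simpa [diagonal_mul] using h₂.apply i k
  refine ⟨fun i => (B i i).re, ?_⟩
  ext i k
  rcases eq_or_ne i k with rfl | hik
  · have hreal : star (B i i) = B i i := mul_right_cancel₀ (by exact_mod_cast hy i) (e₁ i i)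
    rw [diagonal_apply_eq]
    exact (Complex.conj_eq_iff_re.mp hreal).symm
  · have hsq : (y k : ℂ) ^ 2 - (y i : ℂ) ^ 2 ≠ 0 := by
      rw [sub_ne_zero]
      exact_mod_cast fun h => hdist k i hik.symm ((sq_eq_sq_iff_abs_eq_abs _ _).mp h)
    have hB : B i k * ((y k : ℂ) ^ 2 - (y i : ℂ) ^ 2) = 0 := by
      linear_combination (-(y k : ℂ)) * e₁ i k + (y i : ℂ) * e₂ i k
    rw [diagonal_apply_ne _ hik]
    exact (mul_eq_zero.mp hB).resolve_right hsq

end Matrix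

section RectangularDiagonal

variable {n t : ℕ}

theorem rdiag_eq_diagonal_mul (x : Fin n → ℝ) :
    rdiag n t x = (diagonal fun i => (x i : ℂ)) * rdiag n t 1 := by
  ext i j
  simp [rdiag, diagonal_mul]

theorem rdiag_one_mul_conjTranspose (hnt : n ≤ t) : rdiag n t 1 * (rdiag n t 1)ᴴ = 1 := by
  ext i k
  rw [mul_apply, Finset.sum_eq_single (Fin.castLE hnt i)]
  · simp [rdiag, one_apply, Fin.ext_iff, eq_comm]
  · intro j _ hj
    have : (j : ℕ) ≠ i := fun h => hj (Fin.ext h)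
    simp [rdiag, this]
  · simp

theorem exists_eq_rdiag_iff_isHermitian (hnt : n ≤ t) {y : Fin n → ℝ} (hy : ∀ i, y i ≠ 0)
    (hdist : ∀ i j, i ≠ j → |y i| ≠ |y j|) (A : Matrix (Fin n) (Fin t) ℂ) :
    (∃ a, A = rdiag n t a) ↔
      (A * (rdiag n t y)ᴴ).IsHermitian ∧ ((rdiag n t y)ᴴ * A).IsHermitian := by
  rw [rdiag_eq_diagonal_mul y, conjTranspose_mul, (isHermitian_diagonal_ofReal y).eq]
  set Y : Matrix (Fin n) (Fin n) ℂ := diagonal fun i => (y i : ℂ)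
  set P : Matrix (Fin n) (Fin t) ℂ := rdiag n t 1
  have hP : P * Pᴴ = 1 := rdiag_one_mul_conjTranspose hnt
  constructor
  · rintro ⟨a, rfl⟩
    have hAY : ((diagonal fun i => (a i : ℂ)) * Y).IsHermitian := by
      simpa [Y] using isHermitian_diagonal_ofReal (a * y)
    have hYA : (Y * diagonal fun i => (a i : ℂ)).IsHermitian := by
      simpa [Y, mul_comm] using isHermitian_diagonal_ofReal (a * y)
    rw [rdiag_eq_diagonal_mul a]
    constructor
    · rwa [Matrix.mul_assoc, ← Matrix.mul_assoc P, hP, Matrix.one_mul]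
    · simpa only [Matrix.mul_assoc] using isHermitian_conjTranspose_mul_mul P hYA
  · rintro ⟨h₁, h₂⟩
    have hY : IsUnit Y :=
      isUnit_diagonal.mpr (Pi.isUnit_iff.mpr fun i => (Complex.ofReal_ne_zero.mpr (hy i)).isUnit)
    have hAP₁ : (A * Pᴴ * Y).IsHermitian := by rwa [Matrix.mul_assoc]
    have hAP₂ : (Y * (A * Pᴴ)).IsHermitian := by
      simpa only [← Matrix.mul_assoc, hP, Matrix.one_mul] using
        isHermitian_mul_mul_conjTranspose P h₂
    obtain ⟨a, ha⟩ := exists_eq_diagonal_ofReal_of_isHermitian hy hdist hAP₁ hAP₂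
    refine ⟨a, ?_⟩
    calc A = A * Pᴴ * P := eq_mul_conjTranspose_mul_of_isHermitian hP hY h₂
      _ = rdiag n t a := by rw [ha, ← rdiag_eq_diagonal_mul]

end RectangularDiagonal

/-- For `y ∈ ℝⁿ` with nonzero, pairwise-distinct-in-absolute-value entries, the
`q`-orthogonal complement (`q(A,B) = Re Tr(AB*)`) of the orbit-tangent space
`T = {Z₁ diag(y) + diag(y) Z₂* : Z₁ ∈ u(n), Z₂ ∈ u(t)}` is exactly the space of
real diagonal matrices; consequently `ℂ^{n×t}` is the `q`-orthogonal direct sum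
of the real diagonal matrices and `T`. -/
theorem stmt16 (n t : ℕ) (hnt : n ≤ t) (y : Fin n → ℝ)
    (hy : ∀ i, y i ≠ 0)
    (hdist : ∀ i j : Fin n, i ≠ j → |y i| ≠ |y j|) :
    ({A : Matrix (Fin n) (Fin t) ℂ |
        ∀ B ∈ {B : Matrix (Fin n) (Fin t) ℂ |
          ∃ (Z₁ : Matrix (Fin n) (Fin n) ℂ) (Z₂ : Matrix (Fin t) (Fin t) ℂ),
            Z₁ᴴ = -Z₁ ∧ Z₂ᴴ = -Z₂ ∧ B = Z₁ * rdiag n t y + rdiag n t y * Z₂ᴴ},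
          (Matrix.trace (A * Bᴴ)).re = 0}
      = {A : Matrix (Fin n) (Fin t) ℂ | ∃ a : Fin n → ℝ, A = rdiag n t a}) ∧
    (∀ A : Matrix (Fin n) (Fin t) ℂ, ∃ (a : Fin n → ℝ)
        (Z₁ : Matrix (Fin n) (Fin n) ℂ) (Z₂ : Matrix (Fin t) (Fin t) ℂ),
      Z₁ᴴ = -Z₁ ∧ Z₂ᴴ = -Z₂ ∧
      A = rdiag n t a + (Z₁ * rdiag n t y + rdiag n t y * Z₂ᴴ)) := by
  have hT : ∀ A, (∀ B ∈ unitaryOrbitTangent (rdiag n t y), reTraceForm A B = 0) ↔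
      ∃ a, A = rdiag n t a := fun A =>
    (forall_mem_unitaryOrbitTangent_reTraceForm_eq_zero_iff A _).trans
      (exists_eq_rdiag_iff_isHermitian hnt hy hdist A).symm
  refine ⟨Set.ext hT, fun A => ?_⟩
  have hsup := (LinearMap.BilinForm.isCompl_orthogonal_of_anisotropic reTraceForm_isRefl
    (fun _ => reTraceForm_self_eq_zero) (unitaryOrbitTangent (rdiag n t y))).sup_eq_top
  obtain ⟨B, ⟨Z₁, Z₂, hZ₁, hZ₂, rfl⟩, C, hC, hBC⟩ :=
    Submodule.mem_sup.mp (by rw [hsup]; exact Submodule.mem_top (x := A))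
  obtain ⟨a, rfl⟩ := (hT C).mp fun B hB => (reTraceForm_comm C B).trans (hC B hB)
  exact ⟨a, Z₁, Z₂, hZ₁, hZ₂, by rw [← hBC, add_comm]⟩
end
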